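/- arXiv:1504.02739 — 2 statements merged into one kernel-verified Lean document; each statement's English description precedes it below -/
import Mathlib

section
/- If f ∈ ℂ[x₁,…,x_k] is homogeneous of degree d ≥ 1 and g = ℓ·f for a linear form ℓ, and every partial derivative of g is a scalar multiple of f, then (after a linear change of coordinates taking ℓ to x₁) f is divisible by x₁, and by induction f is a scalar multiple of x₁^d. -/
/-!
Since `ℓ` is linear, `∂ᵢ(ℓ f) = ∂ᵢℓ · f + ℓ ∂ᵢf` with `∂ᵢℓ` a constant, so the hypothesis says
that every `ℓ ∂ᵢ f` is a scalar multiple of `f`. For such an `f` of degree `d ≥ 1`, Euler's identity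
`∑ xᵢ ∂ᵢ f = d f` gives an `i` with `∂ᵢ f ≠ 0`; then `ℓ ∂ᵢ f = a f` with `a ≠ 0`, so `ℓ` divides `f`.
The quotient `f / ℓ` inherits the same property, and induction on the degree gives `f = c ℓ^d`.
-/

namespace MvPolynomial

section CommSemiring

variable {σ R : Type*} [CommSemiring R] {ℓ : MvPolynomial σ R}

def HasProportionalPDerivs (ℓ u : MvPolynomial σ R) : Prop :=
  ∀ i : σ, ∃ a : R, ℓ * pderiv i u = a • u

lemma IsHomogeneous.eq_C_coeff_zero {p : MvPolynomial σ R} (hp : p.IsHomogeneous 0) :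
    p = C (p.coeff 0) :=
  totalDegree_eq_zero_iff_eq_C.mp ((totalDegree_zero_iff_isHomogeneous σ).mpr hp)

lemma IsHomogeneous.exists_pderiv_eq_C (hℓ : ℓ.IsHomogeneous 1) (i : σ) :
    ∃ c : R, pderiv i ℓ = C c :=
  ⟨_, (hℓ.pderiv (i := i)).eq_C_coeff_zero⟩

end CommSemiring

section CommRing

variable {σ R : Type*} [CommRing R] {ℓ : MvPolynomial σ R}

lemma IsHomogeneous.exists_mul_pderiv_eq_smul (hℓ : ℓ.IsHomogeneous 1) {v : MvPolynomial σ R}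
    {i : σ} {a : R} (h : pderiv i (ℓ * v) = a • v) : ∃ b : R, ℓ * pderiv i v = b • v := by
  obtain ⟨c, hc⟩ := hℓ.exists_pderiv_eq_C i
  refine ⟨a - c, ?_⟩
  rw [pderiv_mul, hc, smul_eq_C_mul] at h
  rw [smul_eq_C_mul, map_sub]
  linear_combination h

lemma IsHomogeneous.hasProportionalPDerivs_of_mul [IsDomain R] (hℓ : ℓ.IsHomogeneous 1) (hℓ0 : ℓ ≠ 0)
    {v : MvPolynomial σ R} (h : HasProportionalPDerivs ℓ (ℓ * v)) :
    HasProportionalPDerivs ℓ v := by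
  intro i
  obtain ⟨b, hb⟩ := h i
  refine hℓ.exists_mul_pderiv_eq_smul (a := b) (mul_left_cancel₀ hℓ0 ?_)
  rw [hb, mul_smul_comm]

end CommRing

section Field

variable {σ R : Type*} [Field R] [CharZero R] [Fintype σ] {ℓ : MvPolynomial σ R}

lemma IsHomogeneous.exists_pderiv_ne_zero {u : MvPolynomial σ R} {n : ℕ} (hu : u.IsHomogeneous n)
    (hn : n ≠ 0) (hu0 : u ≠ 0) : ∃ i : σ, pderiv i u ≠ 0 := by
  by_contra! h
  have hnu : n • u ≠ 0 := smul_ne_zero hn hu0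
  simp [← hu.sum_X_mul_pderiv, h] at hnu

lemma HasProportionalPDerivs.exists_eq_mul (hℓ0 : ℓ ≠ 0) {u : MvPolynomial σ R} {n : ℕ}
    (h : HasProportionalPDerivs ℓ u) (hu : u.IsHomogeneous n) (hn : n ≠ 0) (hu0 : u ≠ 0) :
    ∃ v : MvPolynomial σ R, v ≠ 0 ∧ v.IsHomogeneous (n - 1) ∧ u = ℓ * v := by
  obtain ⟨i, hi⟩ := hu.exists_pderiv_ne_zero hn hu0
  obtain ⟨a, ha⟩ := h i
  have ha0 : a ≠ 0 := by
    rintro rfl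
    exact mul_ne_zero hℓ0 hi (by rw [ha, zero_smul])
  refine ⟨a⁻¹ • pderiv i u, smul_ne_zero (inv_ne_zero ha0) hi, ?_, ?_⟩
  · rw [smul_eq_C_mul]
    exact hu.pderiv.C_mul a⁻¹
  · rw [mul_smul_comm, ha, smul_smul, inv_mul_cancel₀ ha0, one_smul]

theorem HasProportionalPDerivs.eq_smul_pow (hℓ : ℓ.IsHomogeneous 1) (hℓ0 : ℓ ≠ 0) {n : ℕ} :
    ∀ {u : MvPolynomial σ R}, HasProportionalPDerivs ℓ u → u.IsHomogeneous n → u ≠ 0 →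
      ∃ c : R, c ≠ 0 ∧ u = c • ℓ ^ n := by
  induction n with
  | zero =>
    intro u _ hu hu0
    refine ⟨u.coeff 0, fun h ↦ hu0 ?_, ?_⟩
    · rw [hu.eq_C_coeff_zero, h, map_zero]
    · rw [pow_zero, smul_eq_C_mul, mul_one, ← hu.eq_C_coeff_zero]
  | succ n ih =>
    intro u h hu hu0
    obtain ⟨v, hv0, hv, rfl⟩ := h.exists_eq_mul hℓ0 hu n.succ_ne_zero hu0
    obtain ⟨c, hc0, rfl⟩ := ih (hℓ.hasProportionalPDerivs_of_mul hℓ0 h) hv hv0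
    exact ⟨c, hc0, by rw [pow_succ', mul_smul_comm]⟩

end Field

end MvPolynomial

open MvPolynomial

theorem stmt_4_general {k d : ℕ}
    (ℓ f g : MvPolynomial (Fin k) ℂ)
    (hℓ : ℓ.IsHomogeneous 1) (hℓ0 : ℓ ≠ 0)
    (hf : f.IsHomogeneous d) (hf0 : f ≠ 0)
    (hgf : g = ℓ * f)
    (hder : ∀ i : Fin k, ∃ a : ℂ, pderiv i g = a • f) :
    ∃ c : ℂ, c ≠ 0 ∧ f = c • ℓ ^ d := by
  refine HasProportionalPDerivs.eq_smul_pow hℓ hℓ0 (fun i ↦ ?_) hf hf0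
  obtain ⟨a, ha⟩ := hder i
  exact hℓ.exists_mul_pderiv_eq_smul (hgf ▸ ha)

theorem stmt_4 {k d : ℕ} (hd : 1 ≤ d)
    (ℓ f g : MvPolynomial (Fin k) ℂ)
    (hℓ : ℓ.IsHomogeneous 1) (hℓ0 : ℓ ≠ 0)
    (hf : f.IsHomogeneous d) (hf0 : f ≠ 0)
    (hgf : g = ℓ * f) (hg0 : g ≠ 0)
    (hder : ∀ i : Fin k, ∃ a : ℂ, pderiv i g = a • f) :
    ∃ c : ℂ, c ≠ 0 ∧ f = c • ℓ ^ d :=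
  stmt_4_general ℓ f g hℓ hℓ0 hf hf0 hgf hder
end

section
/- Cartan's Lemma: let ω₁,…,ω_k be linearly independent elements of a vector space V over ℂ, and let η₁,…,η_k ∈ V satisfy Σ_{i=1}^k ω_i ∧ η_i = 0 in Λ²V. Then there exist scalars q_{ij} with q_{ij} = q_{ji} such that η_i = Σ_j q_{ij} ω_j. -/
/-!
Contracting `∑ ωᵢ ∧ ηᵢ = 0` with a linear form `f` gives `∑ f(ωᵢ) ηᵢ = ∑ f(ηᵢ) ωᵢ` in `V`.
Taking for `f` the forms `fⱼ` dual to the independent family `ω` yields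
`ηⱼ = ∑ᵢ fⱼ(ηᵢ) ωᵢ`, and applying `fᵢ` to this shows `fᵢ(ηⱼ) = fⱼ(ηᵢ)`, so `q i j = fⱼ(ηᵢ)`.
-/

open Module

theorem ExteriorAlgebra.sum_dual_smul_eq_of_sum_ι_mul_ι_eq_zero {R M κ : Type*} [CommRing R]
    [AddCommGroup M] [Module R M] [Fintype κ] {ω η : κ → M}
    (h : ∑ i, ι R (ω i) * ι R (η i) = 0) (f : Dual R M) :
    ∑ i, f (ω i) • η i = ∑ i, f (η i) • ω i := by
  have hf := congrArg (CliffordAlgebra.contractLeft (Q := 0) f) h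
  simp only [map_sum, map_zero, CliffordAlgebra.contractLeft_ι_mul,
    CliffordAlgebra.contractLeft_ι, ← Algebra.commutes, ← Algebra.smul_def] at hf
  rw [← sub_eq_zero, ← ι_eq_zero_iff (R := R)]
  simpa [map_sub, map_sum, map_smul] using hf

theorem LinearIndependent.exists_dual_apply_eq_ite {K V ι : Type*} [Field K] [AddCommGroup V]
    [Module K V] [DecidableEq ι] {v : ι → V} (hv : LinearIndependent K v) :
    ∃ f : ι → Dual K V, ∀ i j, f i (v j) = if i = j then 1 else 0 := by
  choose f hf using fun i ↦ LinearMap.exists_extend ((Basis.span hv).coord i)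
  refine ⟨f, fun i j ↦ ?_⟩
  simpa [Basis.span_apply, Finsupp.single_apply, eq_comm] using
    congrArg (· (Basis.span hv j)) (hf i)

theorem stmt_8_general {k : ℕ} (V : Type*) [AddCommGroup V] [Module ℂ V]
    (ω η : Fin k → V) (hω : LinearIndependent ℂ ω)
    (hsum : ∑ i : Fin k,
      ExteriorAlgebra.ι ℂ (ω i) * ExteriorAlgebra.ι ℂ (η i) = 0) :
    ∃ q : Fin k → Fin k → ℂ, (∀ i j, q i j = q j i) ∧
      ∀ i, η i = ∑ j : Fin k, q i j • ω j := by
  obtain ⟨f, hf⟩ := hω.exists_dual_apply_eq_ite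
  have hη : ∀ j, η j = ∑ l, f j (η l) • ω l := fun j ↦ by
    simpa [hf] using ExteriorAlgebra.sum_dual_smul_eq_of_sum_ι_mul_ι_eq_zero hsum (f j)
  have hsymm : ∀ i j, f i (η j) = f j (η i) := fun i j ↦ by
    conv_lhs => rw [hη j]
    simp [hf]
  refine ⟨fun i j ↦ f j (η i), fun i j ↦ hsymm j i, fun i ↦ ?_⟩
  conv_lhs => rw [hη i]
  simp only [hsymm i]

theorem stmt_8 {k : ℕ} (V : Type*) [AddCommGroup V] [Module ℂ V]
    [FiniteDimensional ℂ V]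
    (ω η : Fin k → V) (hω : LinearIndependent ℂ ω)
    (hsum : ∑ i : Fin k,
      ExteriorAlgebra.ι ℂ (ω i) * ExteriorAlgebra.ι ℂ (η i) = 0) :
    ∃ q : Fin k → Fin k → ℂ, (∀ i j, q i j = q j i) ∧
      ∀ i, η i = ∑ j : Fin k, q i j • ω j :=
  stmt_8_general V ω η hω hsum
end
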